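/- arXiv:1804.01490 — 6 statements merged into one kernel-verified Lean document; each statement's English description precedes it below -/
import Mathlib

section
/- Let I = [0,1] and let φ₁,…,φ_m : I → ℝ be continuous functions. Let T = {t₁,…,t_k} ⊂ I be distinct points, let a₁,…,a_k ≥ 0, and let x = ∑_{i=1}^k aᵢ δ_{tᵢ}. Let x̂ be a nonnegative finite Borel measure on I satisfying ∫_I φ_j dx̂ = ∫_I φ_j dx for every j ∈ {1,…,m}. Suppose there exists b ∈ ℝ^m such that the function q = ∑_{j=1}^m b_j φ_j satisfies q(tᵢ) = 0 for every i ∈ {1,…,k} and q(t) > 0 for every t ∈ I \ T, and suppose the k × m matrix [φ_j(tᵢ)]_{i,j} has rank k. Then x̂ = x. -/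
/-!
Pairing the moment equations with the coefficients `b` gives `∫ q ∂x̂ = ∫ q ∂x = ∑ aᵢ q(tᵢ) = 0`.
Since `q ≥ 0` on `I` and `q > 0` off `T`, `x̂` puts no mass outside `T`, so
`x̂ = ∑ cᵢ δ_{tᵢ}`. The moment equations then say `c ᵥ* Φ = a ᵥ* Φ` for
`Φ = [φⱼ(tᵢ)]`, whose rows are linearly independent by the rank condition, so the weights agree.
-/

open MeasureTheory Set

open scoped ENNReal

theorem Matrix.vecMul_injective_of_rank_eq_card {m n K : Type*} [Fintype m] [Fintype n] [Field K]
    {M : Matrix m n K} (hM : M.rank = Fintype.card m) : Function.Injective M.vecMul := by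
  rw [Matrix.vecMul_injective_iff, linearIndependent_iff_card_eq_finrank_span, ← hM,
    M.rank_eq_finrank_span_row, Set.finrank]

namespace MeasureTheory

variable {X ι : Type*} [MeasurableSpace X]

theorem Measure.eq_sum_smul_dirac_of_measure_compl_range_eq_zero [MeasurableSingletonClass X]
    [Fintype ι] {μ : Measure X} {t : ι → X} (ht : Function.Injective t)
    (hμ : μ (range t)ᶜ = 0) : μ = ∑ i, μ {t i} • Measure.dirac (t i) := by
  have hdisj : Pairwise (Function.onFun Disjoint fun i => ({t i} : Set X)) :=
    fun i j hij => disjoint_singleton.mpr (ht.ne hij)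
  calc μ = μ.restrict (⋃ i, {t i}) := by
        rw [iUnion_singleton_eq_range]
        exact (Measure.restrict_eq_self_of_ae_mem (mem_ae_iff.mpr hμ)).symm
    _ = ∑ i, μ {t i} • Measure.dirac (t i) := by
        simp_rw [Measure.restrict_iUnion hdisj (fun _ => measurableSet_singleton _),
          Measure.sum_fintype, Measure.restrict_singleton]

theorem setIntegral_sum_smul_dirac [MeasurableSingletonClass X] [Fintype ι]
    {E : Type*} [NormedAddCommGroup E] [NormedSpace ℝ E] [CompleteSpace E] {s : Set X} {t : ι → X}
    (ht : ∀ i, t i ∈ s) {w : ι → ℝ≥0∞} (hw : ∀ i, w i ≠ ∞) (f : X → E) :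
    ∫ x in s, f x ∂(∑ i, w i • Measure.dirac (t i)) = ∑ i, (w i).toReal • f (t i) := by
  have hs : ∀ᵐ x ∂(∑ i, w i • Measure.dirac (t i)), x ∈ s := by
    simp [mem_ae_iff, Measure.dirac_apply, ht]
  rw [Measure.restrict_eq_self_of_ae_mem hs, integral_finsetSum_measure
    fun i _ => (integrable_dirac enorm_lt_top).smul_measure (hw i)]
  simp_rw [integral_smul_measure, integral_dirac]

theorem measure_diff_eq_zero_of_setIntegral_eq_zero {μ : Measure X} {K Z : Set X} {q : X → ℝ}
    (hK : MeasurableSet K) (hq : IntegrableOn q K μ) (hq_nonneg : ∀ x ∈ K, 0 ≤ q x)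
    (hq_pos : ∀ x ∈ K \ Z, 0 < q x) (h : ∫ x in K, q x ∂μ = 0) : μ (K \ Z) = 0 := by
  have hq_ae : 0 ≤ᵐ[μ.restrict K] q := (ae_restrict_mem hK).mono hq_nonneg
  have hsupp : μ (Function.support q ∩ K) = 0 := by
    simpa [h] using (setIntegral_pos_iff_support_of_nonneg_ae hq_ae hq).not
  exact measure_mono_null
    (fun x hx => show x ∈ Function.support q ∩ K from ⟨(hq_pos x hx).ne', hx.1⟩) hsupp

theorem measure_diff_range_eq_zero_of_certificate [MeasurableSingletonClass X] [Fintype ι]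
    {κ : Type*} [Fintype κ] {μ : Measure X} {K : Set X} (hK : MeasurableSet K)
    {φ : κ → X → ℝ} (hφ : ∀ j, IntegrableOn (φ j) K μ) {t : ι → X} (ht : ∀ i, t i ∈ K)
    {w : ι → ℝ≥0∞} (hw : ∀ i, w i ≠ ∞)
    (hfeas : ∀ j, ∫ x in K, φ j x ∂μ = ∫ x in K, φ j x ∂(∑ i, w i • Measure.dirac (t i)))
    {b : κ → ℝ} (hq_zero : ∀ i, ∑ j, b j * φ j (t i) = 0)
    (hq_pos : ∀ x ∈ K \ range t, 0 < ∑ j, b j * φ j x) : μ (K \ range t) = 0 := by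
  have hq_int : IntegrableOn (fun x => ∑ j, b j * φ j x) K μ :=
    integrable_finsetSum _ fun j _ => (hφ j).const_mul (b j)
  have hq_nonneg : ∀ x ∈ K, 0 ≤ ∑ j, b j * φ j x := by
    intro x hx
    by_cases hxt : x ∈ range t
    · obtain ⟨i, rfl⟩ := hxt
      exact (hq_zero i).ge
    · exact (hq_pos x ⟨hx, hxt⟩).le
  refine measure_diff_eq_zero_of_setIntegral_eq_zero hK hq_int hq_nonneg hq_pos ?_
  calc ∫ x in K, ∑ j, b j * φ j x ∂μ = ∑ j, b j * ∫ x in K, φ j x ∂μ := by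
        rw [integral_finsetSum _ fun j _ => (hφ j).const_mul (b j)]
        simp_rw [integral_const_mul]
    _ = ∑ i, (w i).toReal * ∑ j, b j * φ j (t i) := by
        simp_rw [hfeas, setIntegral_sum_smul_dirac ht hw, smul_eq_mul, Finset.mul_sum]
        rw [Finset.sum_comm]
        exact Finset.sum_congr rfl fun _ _ => Finset.sum_congr rfl fun _ _ => by ring
    _ = 0 := by simp [hq_zero]

theorem sum_smul_dirac_eq_of_setIntegral_eq [MeasurableSingletonClass X] [Fintype ι]
    {κ : Type*} [Fintype κ] {s : Set X} {t : ι → X} (ht : ∀ i, t i ∈ s) {φ : κ → X → ℝ}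
    (hrank : (Matrix.of fun i j => φ j (t i)).rank = Fintype.card ι)
    {w w' : ι → ℝ≥0∞} (hw : ∀ i, w i ≠ ∞) (hw' : ∀ i, w' i ≠ ∞)
    (h : ∀ j, ∫ x in s, φ j x ∂(∑ i, w i • Measure.dirac (t i))
      = ∫ x in s, φ j x ∂(∑ i, w' i • Measure.dirac (t i))) :
    ∑ i, w i • Measure.dirac (t i) = ∑ i, w' i • Measure.dirac (t i) := by
  have hmoments : Matrix.vecMul (fun i => (w i).toReal) (Matrix.of fun i j => φ j (t i))
      = Matrix.vecMul (fun i => (w' i).toReal) (Matrix.of fun i j => φ j (t i)) := by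
    funext j
    simpa [Matrix.vecMul, dotProduct, setIntegral_sum_smul_dirac ht hw,
      setIntegral_sum_smul_dirac ht hw'] using h j
  have hww : w = w' := funext fun i =>
    (ENNReal.toReal_eq_toReal_iff' (hw i) (hw' i)).mp
      (congrFun (Matrix.vecMul_injective_of_rank_eq_card hrank hmoments) i)
  rw [hww]

end MeasureTheory

theorem exact_recovery_noise_free_general
    (m k : ℕ) (φ : Fin m → ℝ → ℝ)
    (hφ : ∀ j, ContinuousOn (φ j) (Icc (0:ℝ) 1))
    (t : Fin k → ℝ) (ht : ∀ i, t i ∈ Icc (0:ℝ) 1)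
    (htinj : Function.Injective t)
    (a : Fin k → ℝ)
    (x : Measure ℝ)
    (hx : x = ∑ i, ENNReal.ofReal (a i) • Measure.dirac (t i))
    (xhat : Measure ℝ) [IsFiniteMeasure xhat]
    (hsupp : xhat (Icc (0:ℝ) 1)ᶜ = 0)
    (hfeas : ∀ j, ∫ s in Icc (0:ℝ) 1, φ j s ∂xhat = ∫ s in Icc (0:ℝ) 1, φ j s ∂x)
    (b : Fin m → ℝ)
    (hq_zero : ∀ i, ∑ j, b j * φ j (t i) = 0)
    (hq_pos : ∀ s ∈ Icc (0:ℝ) 1 \ range t, 0 < ∑ j, b j * φ j s)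
    (hrank : (Matrix.of fun (i : Fin k) (j : Fin m) => φ j (t i)).rank = k) :
    xhat = x := by
  have hint : ∀ j, IntegrableOn (φ j) (Icc 0 1) xhat :=
    fun j => (hφ j).integrableOn_compact isCompact_Icc
  subst hx
  have hnull : xhat (Icc (0:ℝ) 1 \ range t) = 0 :=
    measure_diff_range_eq_zero_of_certificate measurableSet_Icc hint ht
      (fun _ => ENNReal.ofReal_ne_top) hfeas hq_zero hq_pos
  have hconc : xhat (range t)ᶜ = 0 :=
    measure_mono_null (fun s hs => (em (s ∈ Icc (0:ℝ) 1)).imp (fun h => ⟨h, hs⟩) id)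
      (measure_union_null hnull hsupp)
  rw [Measure.eq_sum_smul_dirac_of_measure_compl_range_eq_zero htinj hconc] at hfeas ⊢
  exact sum_smul_dirac_eq_of_setIntegral_eq ht (by rwa [Fintype.card_fin])
    (fun _ => measure_ne_top _ _) (fun _ => ENNReal.ofReal_ne_top) hfeas

/-- **Exact recovery in the noise-free case.**
If a nonnegative measure `xhat` on `I = [0,1]` matches all the moments of the atomic measure
`x = ∑ aᵢ δ_{tᵢ}` against continuous functions `φⱼ`, a dual certificate
`q = ∑ bⱼ φⱼ` exists (vanishing on `T` and strictly positive on `I \ T`), and the matrix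
`[φⱼ(tᵢ)]` has full rank `k`, then `xhat = x`. -/
theorem exact_recovery_noise_free
    (m k : ℕ) (φ : Fin m → ℝ → ℝ)
    (hφ : ∀ j, ContinuousOn (φ j) (Icc (0:ℝ) 1))
    (t : Fin k → ℝ) (ht : ∀ i, t i ∈ Icc (0:ℝ) 1)
    (htinj : Function.Injective t)
    (a : Fin k → ℝ) (ha : ∀ i, 0 ≤ a i)
    (x : Measure ℝ)
    (hx : x = ∑ i, ENNReal.ofReal (a i) • Measure.dirac (t i))
    (xhat : Measure ℝ) [IsFiniteMeasure xhat]
    (hsupp : xhat (Icc (0:ℝ) 1)ᶜ = 0)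
    (hfeas : ∀ j, ∫ s in Icc (0:ℝ) 1, φ j s ∂xhat = ∫ s in Icc (0:ℝ) 1, φ j s ∂x)
    (b : Fin m → ℝ)
    (hq_zero : ∀ i, ∑ j, b j * φ j (t i) = 0)
    (hq_pos : ∀ s ∈ Icc (0:ℝ) 1 \ range t, 0 < ∑ j, b j * φ j s)
    (hrank : (Matrix.of fun (i : Fin k) (j : Fin m) => φ j (t i)).rank = k) :
    xhat = x :=
  exact_recovery_noise_free_general m k φ hφ t ht htinj a x hx xhat hsupp hfeas b hq_zero hq_pos
    hrank
end

section
/- Let I = [0,1], φ₁,…,φ_m : I → ℝ continuous, T = {t₁,…,t_k} ⊂ I distinct with pairwise disjoint T_{i,ε} = [tᵢ−ε, tᵢ+ε] ∩ I and T_ε = ∪ᵢ T_{i,ε}. Let χ = ∑_i aᵢ δ_{tᵢ} with aᵢ ≥ 0, let x̂ be a nonnegative finite measure on I with (∑_j (∫ φ_j dx̂ − ∫ φ_j dχ)²)^{1/2} ≤ 2δ′, and let h = x̂ − χ (a signed measure). Let f : [−ε,ε] → ℝ with f(0) = 0 and f̄ ∈ ℝ. Assume: (a) there is b ∈ ℝ^m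 such that q = ∑_j b_j φ_j satisfies q(tᵢ) = 0, q ≥ f̄ on I \ T_ε, and q(t) ≥ f(t − tᵢ) on T_{i,ε}; (b) with sᵢ = sign(h(T_{i,ε})) ∈ {−1, +1}, there is b⁰ ∈ ℝ^m such that q⁰ = ∑_j b⁰_j φ_j satisfies q⁰(tᵢ) = sᵢ for all i, sᵢ − q⁰(t) ≤ f(t − tᵢ) for all t ∈ T_{i,ε}, and |q⁰(t)| ≤ f̄ for all t ∈ I \ T_ε. Then ∑_{i=1}^k |h(T_{i,ε})| ≤ 2(‖b‖₂ + ‖b⁰‖₂) δ′. -/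
/-! On `T_{i,ε}` the certificates give `q + q⁰ ≥ f(· - tᵢ) + sᵢ - f(· - tᵢ) = sᵢ`, and off `T_ε`
they give `q + q⁰ ≥ f̄ - |q⁰| ≥ 0`. Integrating against `x̂` yields `∑ sᵢ x̂(T_{i,ε}) ≤ ∫ (q + q⁰) dx̂`,
while `∫ (q + q⁰) dχ = ∑ aᵢ (q(tᵢ) + q⁰(tᵢ)) = ∑ aᵢ sᵢ`. Hence
`∑ |h(T_{i,ε})| = ∑ sᵢ h(T_{i,ε}) ≤ ∫ (q + q⁰) d(x̂ - χ) = ⟪b + b⁰, v⟫`, where `v` is the vector of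
moment discrepancies, and Cauchy–Schwarz with `‖v‖₂ ≤ 2δ'` finishes. -/

open MeasureTheory Set

/-- The `ε`-neighbourhood `T_{i,ε} = [tᵢ-ε, tᵢ+ε] ∩ [0,1]` of a point `tᵢ`. -/
def nbhd (ti ε : ℝ) : Set ℝ := Icc (ti - ε) (ti + ε) ∩ Icc 0 1

section Measures

variable {α : Type*} [MeasurableSpace α] {κ : Type*} [Fintype κ]

theorem setIntegral_sum_smul_dirac [MeasurableSingletonClass α] {S : Set α} {t : κ → α}
    (ht : ∀ i, t i ∈ S) {a : κ → ℝ} (ha : ∀ i, 0 ≤ a i) (g : α → ℝ) :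
    ∫ x in S, g x ∂(∑ i, ENNReal.ofReal (a i) • Measure.dirac (t i)) = ∑ i, a i * g (t i) := by
  have hrestrict : (∑ i, ENNReal.ofReal (a i) • Measure.dirac (t i)).restrict S
      = ∑ i, ENNReal.ofReal (a i) • Measure.dirac (t i) := by
    refine Measure.restrict_eq_self_of_ae_mem ?_
    rw [ae_iff, Measure.finsetSum_apply]
    exact Finset.sum_eq_zero fun i _ => by simp [ht i]
  have hint : ∀ i, Integrable g (ENNReal.ofReal (a i) • Measure.dirac (t i)) := fun i =>
    ((integrable_congr (ae_eq_dirac g)).mpr (integrable_const _)).smul_measure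
      ENNReal.ofReal_ne_top
  rw [hrestrict, integral_finsetSum_measure fun i _ => hint i]
  refine Finset.sum_congr rfl fun i _ => ?_
  rw [integral_smul_measure, integral_dirac, ENNReal.toReal_ofReal (ha i), smul_eq_mul]

theorem sum_mul_measureReal_le_setIntegral {μ : Measure α} [IsFiniteMeasure μ] {S : Set α}
    (hS : MeasurableSet S) {T : κ → Set α} (hTm : ∀ i, MeasurableSet (T i))
    (hTS : ∀ i, T i ⊆ S) (hdisj : Pairwise fun i j => Disjoint (T i) (T j)) {g : α → ℝ}
    (hg : IntegrableOn g S μ) {c : κ → ℝ} (hc : ∀ i, ∀ x ∈ T i, c i ≤ g x)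
    (hg0 : ∀ x ∈ S \ ⋃ i, T i, 0 ≤ g x) :
    ∑ i, c i * μ.real (T i) ≤ ∫ x in S, g x ∂μ := by
  have hUm : MeasurableSet (⋃ i, T i) := MeasurableSet.iUnion hTm
  have hsplit := integral_inter_add_sdiff (μ := μ) hUm hg
  rw [inter_eq_self_of_subset_right (iUnion_subset hTS)] at hsplit
  have hpiece : ∀ i, c i * μ.real (T i) ≤ ∫ x in T i, g x ∂μ := fun i => by
    rw [mul_comm, ← smul_eq_mul, ← setIntegral_const]
    exact setIntegral_mono_on (integrableOn_const (measure_ne_top _ _))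
      (hg.mono_set (hTS i)) (hTm i) (hc i)
  calc ∑ i, c i * μ.real (T i)
      ≤ ∑ i, ∫ x in T i, g x ∂μ := Finset.sum_le_sum fun i _ => hpiece i
    _ = ∫ x in ⋃ i, T i, g x ∂μ :=
        (integral_iUnion_fintype hTm hdisj fun i => hg.mono_set (hTS i)).symm
    _ ≤ ∫ x in S, g x ∂μ :=
        hsplit ▸ le_add_of_nonneg_right (setIntegral_nonneg (hS.diff hUm) hg0)

end Measures

section Pairing

variable {ι κ : Type*} [Fintype ι] [Fintype κ]

theorem sum_mul_setIntegral_sub_sum_mul {α : Type*} [MeasurableSpace α] {μ : Measure α}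
    {S : Set α} {φ : ι → α → ℝ} (hφ : ∀ j, IntegrableOn (φ j) S μ) (t : κ → α) (a : κ → ℝ)
    (c : ι → ℝ) :
    ∑ j, c j * (∫ x in S, φ j x ∂μ - ∑ i, a i * φ j (t i))
      = ∫ x in S, ∑ j, c j * φ j x ∂μ - ∑ i, a i * ∑ j, c j * φ j (t i) := by
  rw [integral_finsetSum _ fun j _ => (hφ j).const_mul (c j)]
  simp only [integral_const_mul, mul_sub, Finset.sum_sub_distrib, Finset.mul_sum]
  rw [Finset.sum_comm (f := fun j i => c j * (a i * φ j (t i)))]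
  simp only [mul_left_comm]

theorem sum_mul_le_sqrt_mul_of_sqrt_le {v : ι → ℝ} {r : ℝ} (hv : √(∑ j, v j ^ 2) ≤ r)
    (c : ι → ℝ) : ∑ j, c j * v j ≤ √(∑ j, c j ^ 2) * r :=
  (Real.sum_mul_le_sqrt_mul_sqrt _ _ _).trans (mul_le_mul_of_nonneg_left hv (Real.sqrt_nonneg _))

end Pairing

theorem sign_certificate_mass_bound_general
    (m k : ℕ) (ε δ' : ℝ)
    (φ : Fin m → ℝ → ℝ) (hφ : ∀ j, ContinuousOn (φ j) (Icc (0:ℝ) 1))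
    (t : Fin k → ℝ) (ht : ∀ i, t i ∈ Icc (0:ℝ) 1)
    (hdisj : Pairwise fun i i' : Fin k => Disjoint (nbhd (t i) ε) (nbhd (t i') ε))
    (a : Fin k → ℝ) (ha : ∀ i, 0 ≤ a i)
    (χ : Measure ℝ)
    (hχ : χ = ∑ i, ENNReal.ofReal (a i) • Measure.dirac (t i))
    (xhat : Measure ℝ) [IsFiniteMeasure xhat]
    (hfeas : Real.sqrt (∑ j, (∫ s in Icc (0:ℝ) 1, φ j s ∂xhat
        - ∫ s in Icc (0:ℝ) 1, φ j s ∂χ) ^ 2) ≤ 2 * δ')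
    (f : ℝ → ℝ) (fbar : ℝ)
    -- (a) the nonnegativity dual certificate q = ∑ⱼ bⱼ φⱼ
    (b : Fin m → ℝ)
    (hq_zero : ∀ i, ∑ j, b j * φ j (t i) = 0)
    (hq_far : ∀ s ∈ Icc (0:ℝ) 1 \ ⋃ i, nbhd (t i) ε, fbar ≤ ∑ j, b j * φ j s)
    (hq_near : ∀ i, ∀ s ∈ nbhd (t i) ε, f (s - t i) ≤ ∑ j, b j * φ j s)
    -- (b) the sign-pattern dual certificate q⁰ = ∑ⱼ b⁰ⱼ φⱼ for the signs sᵢ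
    (sgn : Fin k → ℝ)
    (hsgn : ∀ i, sgn i * ((xhat (nbhd (t i) ε)).toReal - a i)
      = |(xhat (nbhd (t i) ε)).toReal - a i|)
    (b₀ : Fin m → ℝ)
    (hq0_interp : ∀ i, ∑ j, b₀ j * φ j (t i) = sgn i)
    (hq0_near : ∀ i, ∀ s ∈ nbhd (t i) ε, sgn i - ∑ j, b₀ j * φ j s ≤ f (s - t i))
    (hq0_far : ∀ s ∈ Icc (0:ℝ) 1 \ ⋃ i, nbhd (t i) ε, |∑ j, b₀ j * φ j s| ≤ fbar) :
    ∑ i, |(xhat (nbhd (t i) ε)).toReal - a i|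
      ≤ 2 * (Real.sqrt (∑ j, (b j) ^ 2) + Real.sqrt (∑ j, (b₀ j) ^ 2)) * δ' := by
  subst hχ
  simp only [setIntegral_sum_smul_dirac ht ha] at hfeas
  have hint : ∀ j, IntegrableOn (φ j) (Icc 0 1) xhat := fun j =>
    (hφ j).integrableOn_compact isCompact_Icc
  have hsum : ∀ s, ∑ j, (b + b₀) j * φ j s = ∑ j, b j * φ j s + ∑ j, b₀ j * φ j s := fun s => by
    simp only [Pi.add_apply, add_mul, Finset.sum_add_distrib]
  have hmass := sum_mul_measureReal_le_setIntegral (T := fun i => nbhd (t i) ε) measurableSet_Icc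
    (fun i => measurableSet_Icc.inter measurableSet_Icc) (fun i => inter_subset_right) hdisj
    (integrable_finsetSum _ fun j _ => (hint j).const_mul ((b + b₀) j)) (c := sgn)
    (fun i s hs => by rw [hsum]; linarith [hq_near i s hs, hq0_near i s hs])
    (fun s hs => by rw [hsum]; linarith [hq_far s hs, (abs_le.1 (hq0_far s hs)).1])
  have hpair := sum_mul_setIntegral_sub_sum_mul hint t a (b + b₀)
  simp only [hsum, hq_zero, hq0_interp, zero_add] at hpair hmass
  simp only [Pi.add_apply, add_mul, Finset.sum_add_distrib] at hpair
  have habs : ∑ i, |(xhat (nbhd (t i) ε)).toReal - a i|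
      = ∑ i, sgn i * xhat.real (nbhd (t i) ε) - ∑ i, a i * sgn i := by
    rw [← Finset.sum_sub_distrib]
    exact Finset.sum_congr rfl fun i _ => by rw [← hsgn i, measureReal_def]; ring
  have hCS := add_le_add (sum_mul_le_sqrt_mul_of_sqrt_le hfeas b)
    (sum_mul_le_sqrt_mul_of_sqrt_le hfeas b₀)
  rw [habs]
  linarith

/-- **Mass-discrepancy bound from two dual certificates (Lemma: dual 3).**
With a nonnegativity certificate `q = ∑ bⱼ φⱼ` and a sign-pattern certificate
`q⁰ = ∑ b⁰ⱼ φⱼ` interpolating the signs `sᵢ` of `h(T_{i,ε}) = xhat(T_{i,ε}) - aᵢ`,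
one has `∑ᵢ |h(T_{i,ε})| ≤ 2(‖b‖₂ + ‖b⁰‖₂) δ'`. -/
theorem sign_certificate_mass_bound
    (m k : ℕ) (ε δ' : ℝ) (hε : 0 < ε)
    (φ : Fin m → ℝ → ℝ) (hφ : ∀ j, ContinuousOn (φ j) (Icc (0:ℝ) 1))
    (t : Fin k → ℝ) (ht : ∀ i, t i ∈ Icc (0:ℝ) 1)
    (htinj : Function.Injective t)
    (hdisj : Pairwise fun i i' : Fin k => Disjoint (nbhd (t i) ε) (nbhd (t i') ε))
    (a : Fin k → ℝ) (ha : ∀ i, 0 ≤ a i)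
    (χ : Measure ℝ)
    (hχ : χ = ∑ i, ENNReal.ofReal (a i) • Measure.dirac (t i))
    (xhat : Measure ℝ) [IsFiniteMeasure xhat]
    (hsupp : xhat (Icc (0:ℝ) 1)ᶜ = 0)
    (hfeas : Real.sqrt (∑ j, (∫ s in Icc (0:ℝ) 1, φ j s ∂xhat
        - ∫ s in Icc (0:ℝ) 1, φ j s ∂χ) ^ 2) ≤ 2 * δ')
    (f : ℝ → ℝ) (hf0 : f 0 = 0) (fbar : ℝ)
    -- (a) the nonnegativity dual certificate q = ∑ⱼ bⱼ φⱼ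
    (b : Fin m → ℝ)
    (hq_zero : ∀ i, ∑ j, b j * φ j (t i) = 0)
    (hq_far : ∀ s ∈ Icc (0:ℝ) 1 \ ⋃ i, nbhd (t i) ε, fbar ≤ ∑ j, b j * φ j s)
    (hq_near : ∀ i, ∀ s ∈ nbhd (t i) ε, f (s - t i) ≤ ∑ j, b j * φ j s)
    -- (b) the sign-pattern dual certificate q⁰ = ∑ⱼ b⁰ⱼ φⱼ for the signs sᵢ
    (sgn : Fin k → ℝ)
    (hsgn_pm : ∀ i, sgn i = 1 ∨ sgn i = -1)
    (hsgn : ∀ i, sgn i * ((xhat (nbhd (t i) ε)).toReal - a i)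
      = |(xhat (nbhd (t i) ε)).toReal - a i|)
    (b₀ : Fin m → ℝ)
    (hq0_interp : ∀ i, ∑ j, b₀ j * φ j (t i) = sgn i)
    (hq0_near : ∀ i, ∀ s ∈ nbhd (t i) ε, sgn i - ∑ j, b₀ j * φ j s ≤ f (s - t i))
    (hq0_far : ∀ s ∈ Icc (0:ℝ) 1 \ ⋃ i, nbhd (t i) ε, |∑ j, b₀ j * φ j s| ≤ fbar) :
    ∑ i, |(xhat (nbhd (t i) ε)).toReal - a i|
      ≤ 2 * (Real.sqrt (∑ j, (b j) ^ 2) + Real.sqrt (∑ j, (b₀ j) ^ 2)) * δ' :=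
  sign_certificate_mass_bound_general m k ε δ' φ hφ t ht hdisj a ha χ hχ xhat hfeas f fbar b hq_zero
    hq_far hq_near sgn hsgn b₀ hq0_interp hq0_near hq0_far
end

section
/- Let m ≥ 2 and let A, B ∈ ℝ^{m×m} with det(A) > 0, and let ρ denote the spectral radius of A⁻¹B (the maximum modulus of its complex eigenvalues). If ρ > 0 and 0 ≤ ε ≤ 8 / (34 m ρ), then det(A) · (1 − (17√e / 8) m ε ρ) ≤ det(A + εB) ≤ det(A) · (1 + (17√e / 8) m ε ρ). In particular, for such ε, det(A)(1 − √e/2) ≤ det(A + εB) ≤ det(A)(1 + √e/2). -/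
/-!
Write `A + εB = A (1 + εM)` with `M = A⁻¹B`. The eigenvalues of `1 + εM` are `1 + εμ` with
`|μ| ≤ ρ`, so `|det (1 + εM) - 1| ≤ (1 + ερ)^m - 1 ≤ mερ e^{mερ}`, and the bound on `ε` gives
`mερ ≤ 4/17 < 1/2`, hence `e^{mερ} ≤ √e`.
-/

theorem Multiset.norm_prod_sub_one_le {R : Type*} [NormedCommRing R] [NormOneClass R]
    (s : Multiset R) {t : ℝ} (h : ∀ x ∈ s, ‖x - 1‖ ≤ t) :
    ‖s.prod - 1‖ ≤ (1 + t) ^ card s - 1 := by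
  induction s using Multiset.induction_on with
  | empty => simp
  | cons a s ih =>
    have ha : ‖a - 1‖ ≤ t := h a (mem_cons_self a s)
    have hs := ih fun x hx => h x (mem_cons_of_mem hx)
    have hna : ‖a‖ ≤ 1 + t := by
      have := norm_le_norm_add_norm_sub' a 1
      rw [norm_one] at this
      linarith
    rw [prod_cons, card_cons]
    calc ‖a * s.prod - 1‖ = ‖a * (s.prod - 1) + (a - 1)‖ := by ring_nf
      _ ≤ ‖a‖ * ‖s.prod - 1‖ + ‖a - 1‖ :=
          (norm_add_le _ _).trans (by gcongr; exact norm_mul_le _ _)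
      _ ≤ (1 + t) * ((1 + t) ^ card s - 1) + t := by
          gcongr
          linarith [(norm_nonneg (a - 1)).trans ha]
      _ = (1 + t) ^ (card s + 1) - 1 := by ring

theorem Matrix.norm_det_sub_one_le {𝕜 n : Type*} [NormedField 𝕜] [IsAlgClosed 𝕜]
    [Fintype n] [DecidableEq n] (N : Matrix n n 𝕜) {t : ℝ}
    (h : ∀ μ ∈ spectrum 𝕜 N, ‖μ - 1‖ ≤ t) :
    ‖N.det - 1‖ ≤ (1 + t) ^ Fintype.card n - 1 := by
  have hcard : Multiset.card N.charpoly.roots = Fintype.card n := by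
    rw [IsAlgClosed.card_roots_eq_natDegree, charpoly_natDegree_eq_dim]
  rw [det_eq_prod_roots_charpoly, ← hcard]
  refine Multiset.norm_prod_sub_one_le _ fun μ hμ => h μ ?_
  rw [mem_spectrum_iff_isRoot_charpoly]
  exact Polynomial.isRoot_of_mem_roots hμ

theorem spectrum.one_add_smul_eq {𝕜 A : Type*} [Field 𝕜] [Ring A] [Algebra 𝕜 A]
    (a : A) {c : 𝕜} (hc : c ≠ 0) :
    spectrum 𝕜 (1 + c • a) = (fun z => 1 + c * z) '' spectrum 𝕜 a := by
  have hu : c • a = Units.mk0 c hc • a := rfl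
  rw [← map_one (algebraMap 𝕜 A), hu, ← spectrum.vadd_eq, spectrum.unit_smul_eq_smul,
    ← Set.image_vadd, ← Set.image_smul, Set.image_image]
  rfl

theorem Matrix.norm_det_one_add_smul_sub_one_le {𝕜 n : Type*} [NormedField 𝕜] [IsAlgClosed 𝕜]
    [Fintype n] [DecidableEq n] (N : Matrix n n 𝕜) (c : 𝕜) {r : ℝ}
    (h : ∀ z ∈ spectrum 𝕜 N, ‖z‖ ≤ r) :
    ‖(1 + c • N).det - 1‖ ≤ (1 + ‖c‖ * r) ^ Fintype.card n - 1 := by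
  rcases eq_or_ne c 0 with rfl | hc
  · simp
  refine norm_det_sub_one_le _ fun μ hμ => ?_
  rw [spectrum.one_add_smul_eq N hc] at hμ
  obtain ⟨z, hz, rfl⟩ := hμ
  rw [add_sub_cancel_left, norm_mul]
  exact mul_le_mul_of_nonneg_left (h z hz) (norm_nonneg c)

theorem Matrix.abs_det_one_add_smul_sub_one_le {n : Type*} [Fintype n] [DecidableEq n]
    (M : Matrix n n ℝ) (ε : ℝ) {r : ℝ}
    (h : ∀ z ∈ spectrum ℂ (M.map ((↑) : ℝ → ℂ)), ‖z‖ ≤ r) :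
    |(1 + ε • M).det - 1| ≤ (1 + |ε| * r) ^ Fintype.card n - 1 := by
  have hmap : ((1 + ε • M).det : ℂ) = (1 + (ε : ℂ) • M.map ((↑) : ℝ → ℂ)).det := by
    rw [show ((1 + ε • M).det : ℂ) = Complex.ofRealHom (1 + ε • M).det from rfl, RingHom.map_det,
      map_add, map_one]
    congr 1
    ext i j
    simp
  have := norm_det_one_add_smul_sub_one_le (M.map ((↑) : ℝ → ℂ)) ε h
  rwa [← hmap, Complex.norm_real, ← Complex.ofReal_one, ← Complex.ofReal_sub,
    Complex.norm_real] at this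

theorem spectrum.norm_le_of_spectralRadius_le {𝕜 A : Type*} [NormedField 𝕜] [Ring A]
    [Algebra 𝕜 A] {a : A} {r : ℝ} (hr : 0 ≤ r) (ha : spectralRadius 𝕜 a ≤ ENNReal.ofReal r)
    {z : 𝕜} (hz : z ∈ spectrum 𝕜 a) : ‖z‖ ≤ r := by
  have : (‖z‖₊ : ENNReal) ≤ ENNReal.ofReal r := (le_iSup₂ (α := ENNReal) z hz).trans ha
  rwa [← ENNReal.ofReal_coe_nnreal, coe_nnnorm, ENNReal.ofReal_le_ofReal_iff hr] at this

theorem Real.exp_sub_one_le_mul_exp (x : ℝ) : Real.exp x - 1 ≤ x * Real.exp x := by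
  have h := Real.one_sub_le_exp_neg x
  have : Real.exp (-x) * Real.exp x = 1 := by rw [← Real.exp_add]; simp
  nlinarith [Real.exp_pos x]

theorem one_add_pow_sub_one_le_mul_exp {t : ℝ} (ht : -1 ≤ t) (n : ℕ) :
    (1 + t) ^ n - 1 ≤ n * t * Real.exp (n * t) := by
  have : (1 + t) ^ n ≤ Real.exp (n * t) := by
    rw [Real.exp_nat_mul]
    exact pow_le_pow_left₀ (by linarith) (by linarith [Real.add_one_le_exp t]) n
  linarith [Real.exp_sub_one_le_mul_exp (n * t)]

theorem one_add_pow_sub_one_le_sqrt_exp_one_mul {t : ℝ} (ht : 0 ≤ t) {n : ℕ}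
    (hnt : n * t ≤ 1 / 2) :
    (1 + t) ^ n - 1 ≤ Real.sqrt (Real.exp 1) * (n * t) := by
  have hexp : Real.exp (n * t) ≤ Real.sqrt (Real.exp 1) := by
    rw [← Real.exp_half]
    exact Real.exp_le_exp.mpr (by linarith)
  calc (1 + t) ^ n - 1 ≤ n * t * Real.exp (n * t) :=
        one_add_pow_sub_one_le_mul_exp (by linarith) n
    _ ≤ n * t * Real.sqrt (Real.exp 1) := by gcongr
    _ = _ := mul_comm _ _

theorem det_perturbation_bounds_general
    (m : ℕ) (A B : Matrix (Fin m) (Fin m) ℝ)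
    (hA : 0 < A.det)
    (ρ ε : ℝ)
    (hρ : ENNReal.ofReal ρ = spectralRadius ℂ ((A⁻¹ * B).map fun x : ℝ => (x : ℂ)))
    (hρpos : 0 < ρ) (hε0 : 0 ≤ ε) (hε : ε ≤ 8 / (34 * m * ρ)) :
    (A.det * (1 - 17 * Real.sqrt (Real.exp 1) / 8 * m * ε * ρ) ≤ (A + ε • B).det
      ∧ (A + ε • B).det ≤ A.det * (1 + 17 * Real.sqrt (Real.exp 1) / 8 * m * ε * ρ))
    ∧ (A.det * (1 - Real.sqrt (Real.exp 1) / 2) ≤ (A + ε • B).det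
      ∧ (A + ε • B).det ≤ A.det * (1 + Real.sqrt (Real.exp 1) / 2)) := by
  have hfactor : A + ε • B = A * (1 + ε • (A⁻¹ * B)) := by
    rw [Matrix.mul_add, Matrix.mul_one, Matrix.mul_smul, ← Matrix.mul_assoc,
      Matrix.mul_nonsing_inv A (isUnit_iff_ne_zero.mpr hA.ne'), Matrix.one_mul]
  have hsmall : m * ε * ρ ≤ 4 / 17 := by
    rcases Nat.eq_zero_or_pos m with rfl | hm
    · norm_num
    rw [le_div_iff₀ (by positivity)] at hε
    linarith
  have hD : |(1 + ε • (A⁻¹ * B)).det - 1| ≤ Real.sqrt (Real.exp 1) * (m * ε * ρ) := by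
    have := (A⁻¹ * B).abs_det_one_add_smul_sub_one_le ε
      fun z hz => spectrum.norm_le_of_spectralRadius_le hρpos.le hρ.ge hz
    rw [abs_of_nonneg hε0, Fintype.card_fin] at this
    refine this.trans ?_
    rw [mul_assoc (m : ℝ)]
    exact one_add_pow_sub_one_le_sqrt_exp_one_mul (by positivity) (by linarith)
  obtain ⟨hlo, hhi⟩ := abs_le.mp hD
  have hsqrt := Real.sqrt_nonneg (Real.exp 1)
  rw [hfactor, Matrix.det_mul]
  refine ⟨⟨?_, ?_⟩, ?_, ?_⟩ <;> apply mul_le_mul_of_nonneg_left _ hA.le <;> nlinarith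

/-- **Determinant perturbation bound (Lemma: determinant bounds).**
For `m ≥ 2`, `A, B ∈ ℝ^{m×m}` with `det A > 0`, and `ρ` the spectral radius of `A⁻¹B`
(the maximum modulus of the complex eigenvalues of its complexification), if `ρ > 0`
and `0 ≤ ε ≤ 8/(34 m ρ)`, then
`det A (1 - (17√e/8) m ε ρ) ≤ det(A + εB) ≤ det A (1 + (17√e/8) m ε ρ)`, and in
particular `det A (1 - √e/2) ≤ det(A + εB) ≤ det A (1 + √e/2)`. -/
theorem det_perturbation_bounds
    (m : ℕ) (hm : 2 ≤ m) (A B : Matrix (Fin m) (Fin m) ℝ)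
    (hA : 0 < A.det)
    (ρ ε : ℝ)
    (hρ : ENNReal.ofReal ρ = spectralRadius ℂ ((A⁻¹ * B).map fun x : ℝ => (x : ℂ)))
    (hρpos : 0 < ρ) (hε0 : 0 ≤ ε) (hε : ε ≤ 8 / (34 * m * ρ)) :
    (A.det * (1 - 17 * Real.sqrt (Real.exp 1) / 8 * m * ε * ρ) ≤ (A + ε • B).det
      ∧ (A + ε • B).det ≤ A.det * (1 + 17 * Real.sqrt (Real.exp 1) / 8 * m * ε * ρ))
    ∧ (A.det * (1 - Real.sqrt (Real.exp 1) / 2) ≤ (A + ε • B).det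
      ∧ (A + ε • B).det ≤ A.det * (1 + Real.sqrt (Real.exp 1) / 2)) :=
  det_perturbation_bounds_general m A B hA ρ ε hρ hρpos hε0 hε
end

section
/- Let σ > 0, Δ > 0, let t₁ < … < t_k be real numbers with t_{i+1} − t_i ≥ Δ for all i, and let s ∈ ℝ be arbitrary. Then, with g(t) = exp(−t²/σ²): ∑_{i=1}^{k} g(tᵢ − s)² ≤ 2 / (1 − e^{−Δ²/σ²}). -/
lemma geom_inj_sum_bound {ι : Type*} (r : ℝ) (hr0 : 0 ≤ r) (hr1 : r < 1)
    (S : Finset ι) (f : ι → ℕ) (hf : Set.InjOn f S) (g : ι → ℝ)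
    (hg : ∀ i ∈ S, g i ≤ r ^ f i) :
    ∑ i ∈ S, g i ≤ 1 / (1 - r) := by
  calc ∑ i ∈ S, g i ≤ ∑ i ∈ S, r ^ f i := Finset.sum_le_sum hg
    _ = ∑ n ∈ S.image f, r ^ n := (Finset.sum_image (fun a ha b hb h => hf ha hb h)).symm
    _ ≤ ∑' n : ℕ, r ^ n := by
        apply Summable.sum_le_tsum _ (fun n _ => pow_nonneg hr0 n)
        exact summable_geometric_of_lt_one hr0 hr1
    _ = (1 - r)⁻¹ := tsum_geometric_of_lt_one hr0 hr1
    _ = 1 / (1 - r) := (one_div _).symm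

/-- **Uniform bound on a sum of squared Gaussians at separated points.**
If `t₁ < … < t_k` have consecutive gaps at least `Δ > 0` and `s ∈ ℝ` is arbitrary, then,
with `g(t) = exp(-t²/σ²)`: `∑ᵢ g(tᵢ - s)² ≤ 2/(1 - e^{-Δ²/σ²})`. -/
theorem gaussian_squared_sum_bound
    (σ Δ : ℝ) (hσ : 0 < σ) (hΔ : 0 < Δ)
    (k : ℕ) (t : Fin k → ℝ)
    (hsep : ∀ i j : Fin k, (i : ℕ) + 1 = (j : ℕ) → Δ ≤ t j - t i)
    (s : ℝ) :
    ∑ i : Fin k, (Real.exp (-(t i - s) ^ 2 / σ ^ 2)) ^ 2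
      ≤ 2 / (1 - Real.exp (-Δ ^ 2 / σ ^ 2)) := by
  set r : ℝ := Real.exp (-Δ ^ 2 / σ ^ 2) with hr
  have hr0 : 0 < r := Real.exp_pos _
  have hσ2 : (0:ℝ) < σ ^ 2 := pow_pos hσ 2
  have hr1 : r < 1 := by
    rw [hr, Real.exp_lt_one_iff]
    apply div_neg_of_neg_of_pos _ hσ2
    simpa using pow_pos hΔ 2
  have h1r : (0:ℝ) < 1 - r := by linarith
  -- gap lemma
  have gap : ∀ n : ℕ, ∀ i j : Fin k, (i : ℕ) + n = (j : ℕ) → (n : ℝ) * Δ ≤ t j - t i := by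
    intro n
    induction n with
    | zero => intro i j h; have : i = j := Fin.ext (by omega); simp [this]
    | succ n ih =>
      intro i j h
      have hlt : (i : ℕ) + n < k := by omega
      set j' : Fin k := ⟨(i : ℕ) + n, hlt⟩ with hj'
      have h1 : (n : ℝ) * Δ ≤ t j' - t i := ih i j' rfl
      have h2 : Δ ≤ t j - t j' := hsep j' j (by simp [hj']; omega)
      push_cast
      linarith
  -- per-term bound
  have term_bound : ∀ (i : Fin k) (n : ℕ), (n : ℝ) * Δ ≤ |t i - s| →
      (Real.exp (-(t i - s) ^ 2 / σ ^ 2)) ^ 2 ≤ r ^ n := by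
    intro i n hn
    have h1 : (n : ℝ) * Δ ^ 2 ≤ (t i - s) ^ 2 := by
      have h2 : ((n : ℝ) * Δ) ^ 2 ≤ (t i - s) ^ 2 := by
        rw [← sq_abs (t i - s)]
        exact pow_le_pow_left₀ (by positivity) hn 2
      have hn2 : (n:ℝ) ≤ (n:ℝ) ^ 2 := by
        exact_mod_cast Nat.le_self_pow (by norm_num) n
      have h3 : (n:ℝ) * Δ ^ 2 ≤ (n:ℝ) ^ 2 * Δ ^ 2 :=
        mul_le_mul_of_nonneg_right hn2 (sq_nonneg Δ)
      have h4 : ((n:ℝ) * Δ) ^ 2 = (n:ℝ) ^ 2 * Δ ^ 2 := by ring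
      linarith
    have e1 : (Real.exp (-(t i - s) ^ 2 / σ ^ 2)) ^ 2
        = Real.exp ((2:ℕ) * (-(t i - s) ^ 2 / σ ^ 2)) := by
      rw [Real.exp_nat_mul]
    have e2 : r ^ n = Real.exp ((n:ℕ) * (-Δ ^ 2 / σ ^ 2)) := by
      rw [Real.exp_nat_mul]
    rw [e1, e2]
    apply Real.exp_le_exp.mpr
    rw [mul_div_assoc', mul_div_assoc', div_le_div_iff₀ hσ2 hσ2]
    push_cast
    nlinarith [mul_le_mul_of_nonneg_right h1 hσ2.le, sq_nonneg (t i - s), hσ2,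
      mul_nonneg (sq_nonneg (t i - s)) hσ2.le]
  set g : Fin k → ℝ := fun i => (Real.exp (-(t i - s) ^ 2 / σ ^ 2)) ^ 2 with hg
  have hg0 : ∀ i, 0 ≤ g i := fun i => sq_nonneg _
  set A : Finset (Fin k) := Finset.univ.filter (fun i => t i ≤ s) with hA
  set B : Finset (Fin k) := Finset.univ.filter (fun i => ¬ t i ≤ s) with hB
  have hsplit : ∑ i : Fin k, g i = ∑ i ∈ A, g i + ∑ i ∈ B, g i :=
    (Finset.sum_filter_add_sum_filter_not _ _ _).symm
  have boundA : ∑ i ∈ A, g i ≤ 1 / (1 - r) := by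
    rcases A.eq_empty_or_nonempty with hE | hNE
    · rw [hE]; simp; exact hr1.le
    · set M := A.max' hNE with hM
      have hMA : M ∈ A := A.max'_mem hNE
      have hMs : t M ≤ s := by simpa [hA] using hMA
      apply geom_inj_sum_bound r hr0.le hr1 A (fun i => (M : ℕ) - (i : ℕ))
      · intro a ha b hb hab
        have ha' : a ≤ M := A.le_max' a ha
        have hb' : b ≤ M := A.le_max' b hb
        have h1 : (a : ℕ) ≤ (M : ℕ) := ha'
        have h2 : (b : ℕ) ≤ (M : ℕ) := hb'
        have hab' : (M : ℕ) - (a : ℕ) = (M : ℕ) - (b : ℕ) := hab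
        exact Fin.ext (by omega)
      · intro i hi
        have hi' : (i : ℕ) ≤ (M : ℕ) := A.le_max' i hi
        have his : t i ≤ s := by simpa [hA] using hi
        have := gap ((M : ℕ) - (i : ℕ)) i M (by omega)
        apply term_bound
        rw [abs_sub_comm, abs_of_nonneg (by linarith)]
        linarith
  have boundB : ∑ i ∈ B, g i ≤ 1 / (1 - r) := by
    rcases B.eq_empty_or_nonempty with hE | hNE
    · rw [hE]; simp; exact hr1.le
    · set m := B.min' hNE with hm
      have hmB : m ∈ B := B.min'_mem hNE
      have hms : s < t m := by
        have := hmB; rw [hB, Finset.mem_filter] at this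
        exact lt_of_not_ge this.2
      apply geom_inj_sum_bound r hr0.le hr1 B (fun i => (i : ℕ) - (m : ℕ))
      · intro a ha b hb hab
        have ha' : m ≤ a := B.min'_le a ha
        have hb' : m ≤ b := B.min'_le b hb
        have h1 : (m : ℕ) ≤ (a : ℕ) := ha'
        have h2 : (m : ℕ) ≤ (b : ℕ) := hb'
        have hab' : (a : ℕ) - (m : ℕ) = (b : ℕ) - (m : ℕ) := hab
        exact Fin.ext (by omega)
      · intro i hi
        have hi' : (m : ℕ) ≤ (i : ℕ) := B.min'_le i hi
        have his : s < t i := by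
          have := hi; rw [hB, Finset.mem_filter] at this
          exact lt_of_not_ge this.2
        have := gap ((i : ℕ) - (m : ℕ)) m i (by omega)
        apply term_bound
        rw [abs_of_nonneg (by linarith)]
        linarith
  have h2 : 1 / (1 - r) + 1 / (1 - r) = 2 / (1 - r) := by ring
  rw [hsplit]
  linarith
end

section
/- Let σ > 0, Δ > 0, let t₁ < … < t_k ∈ [0,1] with t_{i+1} − t_i ≥ Δ for all i, and let s ∈ [0,1]. Then, with g(t) = exp(−t²/σ²): (a) ∑_{i=1}^{k} g′(tᵢ − s)² ≤ (4/σ⁴) · 2/(1 − e^{−Δ²/σ²}); and (b) ∑_{i=1}^{k} g″(tᵢ − s)² ≤ (2/σ² + 4/σ⁴)² · 2/(1 − e^{−Δ²/σ²}). -/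
open Set

lemma gauss_exp_sum_bound (σ Δ : ℝ) (hσ : 0 < σ) (hΔ : 0 < Δ)
    (k : ℕ) (t : Fin k → ℝ)
    (hsep : ∀ i j : Fin k, (i : ℕ) + 1 = (j : ℕ) → Δ ≤ t j - t i) (s : ℝ) :
    ∑ i : Fin k, Real.exp (-(t i - s) ^ 2 / σ ^ 2)
      ≤ 2 / (1 - Real.exp (-Δ ^ 2 / σ ^ 2)) := by
  set q : ℝ := Real.exp (-Δ ^ 2 / σ ^ 2) with hq
  have hσ2 : (0:ℝ) < σ ^ 2 := by positivity
  have hq0 : 0 ≤ q := Real.exp_nonneg _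
  have hq1 : q < 1 := by
    rw [hq]
    have : -Δ ^ 2 / σ ^ 2 < 0 := by
      apply div_neg_of_neg_of_pos _ hσ2
      nlinarith
    calc Real.exp (-Δ ^ 2 / σ ^ 2) < Real.exp 0 := Real.exp_lt_exp.2 this
      _ = 1 := Real.exp_zero
  have h1q : (0:ℝ) < 1 - q := by linarith
  -- telescoped gaps
  have hgap : ∀ (n : ℕ) (i j : Fin k), (i : ℕ) + n = (j : ℕ) → (n : ℝ) * Δ ≤ t j - t i := by
    intro n
    induction n with
    | zero => intro i j hij; have : i = j := Fin.ext (by omega); simp [this]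
    | succ n ih =>
        intro i j hij
        have hlt : (i : ℕ) + n < k := by omega
        set j' : Fin k := ⟨(i : ℕ) + n, hlt⟩
        have h1 := ih i j' rfl
        have h2 := hsep j' j (by simp [j']; omega)
        push_cast
        nlinarith
  -- geometric sum bound
  have G : ∑ m ∈ Finset.range k, q ^ m ≤ 1 / (1 - q) := by
    rw [le_div_iff₀ h1q]
    have := geom_sum_mul q k
    nlinarith [pow_nonneg hq0 k]
  -- per element bound given index distance
  have key : ∀ (i : Fin k) (n : ℕ), (n : ℝ) * Δ ≤ |t i - s| →
      Real.exp (-(t i - s) ^ 2 / σ ^ 2) ≤ q ^ n := by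
    intro i n hn
    have h1 : ((n : ℝ) * Δ) ^ 2 ≤ (t i - s) ^ 2 := by
      have := sq_abs (t i - s)
      nlinarith [mul_nonneg (Nat.cast_nonneg (α := ℝ) n) hΔ.le, abs_nonneg (t i - s)]
    have h2 : (n : ℝ) * Δ ^ 2 ≤ ((n : ℝ) * Δ) ^ 2 := by
      have hn1 : (n : ℝ) ≤ (n : ℝ) ^ 2 := by
        rcases Nat.eq_zero_or_pos n with h | h
        · simp [h]
        · have : (1:ℝ) ≤ (n:ℝ) := by exact_mod_cast h
          nlinarith
      nlinarith [sq_nonneg Δ]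
    have : -(t i - s) ^ 2 / σ ^ 2 ≤ (n : ℝ) * (-Δ ^ 2 / σ ^ 2) := by
      rw [show (n : ℝ) * (-Δ ^ 2 / σ ^ 2) = -((n : ℝ) * Δ ^ 2) / σ ^ 2 by ring]
      exact (div_le_div_iff_of_pos_right hσ2).2 (by nlinarith)
    calc Real.exp (-(t i - s) ^ 2 / σ ^ 2) ≤ Real.exp ((n : ℝ) * (-Δ ^ 2 / σ ^ 2)) :=
          Real.exp_le_exp.2 this
      _ = q ^ n := by rw [hq, ← Real.exp_nat_mul]
  -- split into right and left points
  classical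
  set S : Finset (Fin k) := Finset.univ.filter (fun i => s ≤ t i) with hS
  have hsplit : ∑ i : Fin k, Real.exp (-(t i - s) ^ 2 / σ ^ 2)
      = (∑ i ∈ S, Real.exp (-(t i - s) ^ 2 / σ ^ 2))
        + ∑ i ∈ Sᶜ, Real.exp (-(t i - s) ^ 2 / σ ^ 2) :=
    (Finset.sum_add_sum_compl S _).symm
  have boundS : ∀ (T : Finset (Fin k)) (e : Fin k → ℕ),
      (Set.InjOn e T) → (∀ i ∈ T, e i < k) →
      (∀ i ∈ T, ((e i : ℝ)) * Δ ≤ |t i - s|) →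
      ∑ i ∈ T, Real.exp (-(t i - s) ^ 2 / σ ^ 2) ≤ 1 / (1 - q) := by
    intro T e hinj hlt hd
    calc ∑ i ∈ T, Real.exp (-(t i - s) ^ 2 / σ ^ 2)
        ≤ ∑ i ∈ T, q ^ (e i) := Finset.sum_le_sum (fun i hi => key i (e i) (hd i hi))
      _ = ∑ m ∈ T.image e, q ^ m := (Finset.sum_image (fun a ha b hb h => hinj ha hb h)).symm
      _ ≤ ∑ m ∈ Finset.range k, q ^ m := by
          apply Finset.sum_le_sum_of_subset_of_nonneg
          · intro m hm
            rcases Finset.mem_image.1 hm with ⟨i, hi, rfl⟩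
            exact Finset.mem_range.2 (hlt i hi)
          · intro m _ _; positivity
      _ ≤ 1 / (1 - q) := G
  have hRight : ∑ i ∈ S, Real.exp (-(t i - s) ^ 2 / σ ^ 2) ≤ 1 / (1 - q) := by
    rcases S.eq_empty_or_nonempty with h | h
    · rw [h, Finset.sum_empty]; positivity
    · set i₀ := S.min' h with hi₀
      have hmem : i₀ ∈ S := S.min'_mem h
      have hle : ∀ i ∈ S, i₀ ≤ i := fun i hi => S.min'_le i hi
      apply boundS S (fun i => (i : ℕ) - (i₀ : ℕ))
      · intro a ha b hb hab
        have ha' := hle a ha; have hb' := hle b hb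
        exact Fin.ext (by simp at hab; omega)
      · intro i _; omega
      · intro i hi
        have h0 : s ≤ t i₀ := by simpa [hS] using hmem
        have h1 : s ≤ t i := by simpa [hS] using hi
        have h2 := hgap ((i : ℕ) - (i₀ : ℕ)) i₀ i (by have := hle i hi; omega)
        rw [abs_of_nonneg (by linarith)]
        linarith
  have hLeft : ∑ i ∈ Sᶜ, Real.exp (-(t i - s) ^ 2 / σ ^ 2) ≤ 1 / (1 - q) := by
    rcases Sᶜ.eq_empty_or_nonempty with h | h
    · rw [h, Finset.sum_empty]; positivity
    · set i₁ := Sᶜ.max' h with hi₁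
      have hmem : i₁ ∈ Sᶜ := Sᶜ.max'_mem h
      have hle : ∀ i ∈ Sᶜ, i ≤ i₁ := fun i hi => Sᶜ.le_max' i hi
      apply boundS Sᶜ (fun i => (i₁ : ℕ) - (i : ℕ))
      · intro a ha b hb hab
        have ha' := hle a ha; have hb' := hle b hb
        exact Fin.ext (by simp at hab; omega)
      · intro i _; omega
      · intro i hi
        have h0 : t i₁ < s := by
          have := hmem; simp [hS, Finset.mem_compl] at this; linarith
        have h1 : t i < s := by
          have := hi; simp [hS, Finset.mem_compl] at this; linarith
        have h2 := hgap ((i₁ : ℕ) - (i : ℕ)) i i₁ (by have := hle i hi; omega)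
        rw [abs_of_nonpos (by linarith)]
        linarith
  rw [hsplit]
  have : (2:ℝ) / (1 - q) = 1 / (1 - q) + 1 / (1 - q) := by ring
  rw [this]
  exact add_le_add hRight hLeft

/-- **Bounds on sums of squared Gaussian derivatives at separated points.**
With `g(t) = exp(-t²/σ²)`, `g'(t) = -(2t/σ²)e^{-t²/σ²}`,
`g''(t) = (4t²/σ⁴ - 2/σ²)e^{-t²/σ²}`, points `t₁ < … < t_k ∈ [0,1]` with consecutive gaps
at least `Δ > 0`, and `s ∈ [0,1]`:
(a) `∑ᵢ g'(tᵢ - s)² ≤ (4/σ⁴)·2/(1 - e^{-Δ²/σ²})`, and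
(b) `∑ᵢ g''(tᵢ - s)² ≤ (2/σ² + 4/σ⁴)²·2/(1 - e^{-Δ²/σ²})`. -/
theorem gaussian_derivative_squared_sum_bounds
    (σ Δ : ℝ) (hσ : 0 < σ) (hΔ : 0 < Δ)
    (k : ℕ) (t : Fin k → ℝ) (ht : ∀ i, t i ∈ Icc (0:ℝ) 1)
    (hsep : ∀ i j : Fin k, (i : ℕ) + 1 = (j : ℕ) → Δ ≤ t j - t i)
    (s : ℝ) (hs : s ∈ Icc (0:ℝ) 1) :
    (∑ i : Fin k, (-(2 * (t i - s) / σ ^ 2)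
        * Real.exp (-(t i - s) ^ 2 / σ ^ 2)) ^ 2
      ≤ (4 / σ ^ 4) * (2 / (1 - Real.exp (-Δ ^ 2 / σ ^ 2))))
    ∧ (∑ i : Fin k, ((4 * (t i - s) ^ 2 / σ ^ 4 - 2 / σ ^ 2)
        * Real.exp (-(t i - s) ^ 2 / σ ^ 2)) ^ 2
      ≤ (2 / σ ^ 2 + 4 / σ ^ 4) ^ 2 * (2 / (1 - Real.exp (-Δ ^ 2 / σ ^ 2)))) := by
  have hsum := gauss_exp_sum_bound σ Δ hσ hΔ k t hsep s
  have hσ2 : (0:ℝ) < σ ^ 2 := by positivity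
  have hσ4 : (0:ℝ) < σ ^ 4 := by positivity
  have hx2 : ∀ i : Fin k, (t i - s) ^ 2 ≤ 1 := by
    intro i
    obtain ⟨h1, h2⟩ := ht i
    obtain ⟨h3, h4⟩ := hs
    nlinarith
  have hexp : ∀ i : Fin k, Real.exp (-(t i - s) ^ 2 / σ ^ 2) ≤ 1 := by
    intro i
    rw [← Real.exp_zero]
    apply Real.exp_le_exp.2
    apply div_nonpos_of_nonpos_of_nonneg _ hσ2.le
    nlinarith [sq_nonneg (t i - s)]
  constructor
  · calc ∑ i : Fin k, (-(2 * (t i - s) / σ ^ 2) * Real.exp (-(t i - s) ^ 2 / σ ^ 2)) ^ 2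
        ≤ ∑ i : Fin k, (4 / σ ^ 4) * Real.exp (-(t i - s) ^ 2 / σ ^ 2) := by
          apply Finset.sum_le_sum
          intro i _
          have he0 := Real.exp_nonneg (-(t i - s) ^ 2 / σ ^ 2)
          have he1 := hexp i
          have hc : (-(2 * (t i - s) / σ ^ 2)) ^ 2 ≤ 4 / σ ^ 4 := by
            have hx := hx2 i
            have heq : (-(2 * (t i - s) / σ ^ 2)) ^ 2 = 4 * (t i - s) ^ 2 / σ ^ 4 := by
              field_simp
              ring
            rw [heq, div_le_div_iff₀ hσ4 hσ4]
            nlinarith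
          calc (-(2 * (t i - s) / σ ^ 2) * Real.exp (-(t i - s) ^ 2 / σ ^ 2)) ^ 2
              = (-(2 * (t i - s) / σ ^ 2)) ^ 2 * (Real.exp (-(t i - s) ^ 2 / σ ^ 2)) ^ 2 := by
                ring
            _ ≤ (4 / σ ^ 4) * Real.exp (-(t i - s) ^ 2 / σ ^ 2) := by
                apply mul_le_mul hc _ (by positivity) (by positivity)
                nlinarith
      _ = (4 / σ ^ 4) * ∑ i : Fin k, Real.exp (-(t i - s) ^ 2 / σ ^ 2) := by
          rw [Finset.mul_sum]
      _ ≤ (4 / σ ^ 4) * (2 / (1 - Real.exp (-Δ ^ 2 / σ ^ 2))) := by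
          apply mul_le_mul_of_nonneg_left hsum (by positivity)
  · calc ∑ i : Fin k, ((4 * (t i - s) ^ 2 / σ ^ 4 - 2 / σ ^ 2) * Real.exp (-(t i - s) ^ 2 / σ ^ 2)) ^ 2
        ≤ ∑ i : Fin k, (2 / σ ^ 2 + 4 / σ ^ 4) ^ 2 * Real.exp (-(t i - s) ^ 2 / σ ^ 2) := by
          apply Finset.sum_le_sum
          intro i _
          have he0 := Real.exp_nonneg (-(t i - s) ^ 2 / σ ^ 2)
          have he1 := hexp i
          have hc : (4 * (t i - s) ^ 2 / σ ^ 4 - 2 / σ ^ 2) ^ 2 ≤ (2 / σ ^ 2 + 4 / σ ^ 4) ^ 2 := by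
            apply sq_le_sq'
            · have : (0:ℝ) ≤ 4 * (t i - s) ^ 2 / σ ^ 4 := by positivity
              have h4 : (0:ℝ) ≤ 4 / σ ^ 4 := by positivity
              linarith
            · have hx := hx2 i
              have : 4 * (t i - s) ^ 2 / σ ^ 4 ≤ 4 / σ ^ 4 := by
                rw [div_le_div_iff₀ hσ4 hσ4]
                nlinarith
              have h2σ : (0:ℝ) ≤ 2 / σ ^ 2 := by positivity
              linarith
          calc ((4 * (t i - s) ^ 2 / σ ^ 4 - 2 / σ ^ 2) * Real.exp (-(t i - s) ^ 2 / σ ^ 2)) ^ 2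
              = (4 * (t i - s) ^ 2 / σ ^ 4 - 2 / σ ^ 2) ^ 2 * (Real.exp (-(t i - s) ^ 2 / σ ^ 2)) ^ 2 := by
                ring
            _ ≤ (2 / σ ^ 2 + 4 / σ ^ 4) ^ 2 * Real.exp (-(t i - s) ^ 2 / σ ^ 2) := by
                apply mul_le_mul hc _ (by positivity) (by positivity)
                nlinarith
      _ = (2 / σ ^ 2 + 4 / σ ^ 4) ^ 2 * ∑ i : Fin k, Real.exp (-(t i - s) ^ 2 / σ ^ 2) := by
          rw [Finset.mul_sum]
      _ ≤ (2 / σ ^ 2 + 4 / σ ^ 4) ^ 2 * (2 / (1 - Real.exp (-Δ ^ 2 / σ ^ 2))) := by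
          apply mul_le_mul_of_nonneg_left hsum (by positivity)
end

section
/- Let m ≥ 2, f₀, f₁ > 0, and let X ∈ ℝ^{m×3} be the matrix whose only nonzero entries are X_{1,1} = f₀, X_{m,1} = f₁, X_{1,2} = 1, X_{m,3} = 1. Set C̄ = f₀² + f₁² + 2f₀ + 2f₁ + 2. Let E ∈ ℝ^{m×3} be any matrix whose operator norm satisfies ‖E‖₂ ≤ √C̄. Then det((X + E)ᵀ (X + E)) ≤ 48 C̄^{5/2} ‖E‖₂. -/
open Matrix RealInnerProductSpace

noncomputable def l2OpNorm {p q : ℕ} (E : Matrix (Fin p) (Fin q) ℝ) : ℝ :=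
  ‖LinearMap.toContinuousLinearMap (Matrix.toEuclideanLin E)‖

lemma l2OpNorm_nonneg {p q : ℕ} (E : Matrix (Fin p) (Fin q) ℝ) : 0 ≤ l2OpNorm E :=
  norm_nonneg _

lemma norm_toEuclideanLin_le {p q : ℕ} (E : Matrix (Fin p) (Fin q) ℝ)
    (x : EuclideanSpace ℝ (Fin q)) :
    ‖Matrix.toEuclideanLin E x‖ ≤ l2OpNorm E * ‖x‖ := by
  simpa [l2OpNorm] using (LinearMap.toContinuousLinearMap (Matrix.toEuclideanLin E)).le_opNorm x

lemma rayleigh_min {n : ℕ} (hn : 0 < n) (A : Matrix (Fin n) (Fin n) ℝ)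
    (hA : A.IsHermitian) (v : EuclideanSpace ℝ (Fin n)) :
    ∃ i, hA.eigenvalues i * ‖v‖ ^ 2 ≤ ⟪v, Matrix.toEuclideanLin A v⟫ := by
  set b := hA.eigenvectorBasis with hbdef
  have hb : ∀ j, Matrix.toEuclideanLin A (b j) = hA.eigenvalues j • b j := by
    intro j
    have h2 := hA.mulVec_eigenvectorBasis j
    apply PiLp.ext
    intro k
    have : (Matrix.toEuclideanLin A (b j)) k = (A *ᵥ ⇑(b j)) k := by
      simp [Matrix.toEuclideanLin_apply]
    rw [this, h2]
    rfl
  have hsym : ∀ j, ⟪b j, Matrix.toEuclideanLin A v⟫ = hA.eigenvalues j * ⟪b j, v⟫ := by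
    intro j
    have hs := (Matrix.isHermitian_iff_isSymmetric.mp hA) (b j) v
    rw [← hs, hb j, inner_smul_left]
    simp
  obtain ⟨i0, _, hi0⟩ := Finset.exists_min_image Finset.univ hA.eigenvalues
    ⟨⟨0, hn⟩, Finset.mem_univ _⟩
  refine ⟨i0, ?_⟩
  have e1 : ⟪v, Matrix.toEuclideanLin A v⟫
      = ∑ j, hA.eigenvalues j * (⟪v, b j⟫ * ⟪b j, v⟫) := by
    rw [← b.sum_inner_mul_inner v (Matrix.toEuclideanLin A v)]
    congr 1; funext j
    rw [hsym j]; ring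
  have e2 : (‖v‖:ℝ) ^ 2 = ∑ j, ⟪v, b j⟫ * ⟪b j, v⟫ := by
    rw [b.sum_inner_mul_inner v v, real_inner_self_eq_norm_sq]
  rw [e1, e2, Finset.mul_sum]
  apply Finset.sum_le_sum
  intro j _
  have : ⟪v, b j⟫ * ⟪b j, v⟫ = ⟪b j, v⟫ ^ 2 := by
    rw [real_inner_comm v (b j)]; ring
  rw [this]
  exact mul_le_mul_of_nonneg_right (hi0 j (Finset.mem_univ _)) (sq_nonneg _)

set_option maxHeartbeats 1000000 in
/-- **Perturbed Gram determinant bound (bound on `det(C*C)`).**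
Let `m ≥ 2`, `f₀, f₁ > 0`, let `X ∈ ℝ^{m×3}` have only nonzero entries
`X_{1,1} = f₀`, `X_{m,1} = f₁`, `X_{1,2} = 1`, `X_{m,3} = 1`, and set
`C̄ = f₀² + f₁² + 2f₀ + 2f₁ + 2`. If `E ∈ ℝ^{m×3}` has spectral norm `‖E‖₂ ≤ √C̄`, then
`det((X+E)ᵀ(X+E)) ≤ 48·C̄^{5/2}·‖E‖₂`. -/
theorem perturbed_gram_det_bound
    (m : ℕ) (hm : 2 ≤ m) (f₀ f₁ : ℝ) (hf₀ : 0 < f₀) (hf₁ : 0 < f₁)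
    (X : Matrix (Fin m) (Fin 3) ℝ)
    (hX : ∀ i j, X i j =
      if (i : ℕ) = 0 then
        (if (j : ℕ) = 0 then f₀ else if (j : ℕ) = 1 then 1 else 0)
      else if (i : ℕ) = m - 1 then
        (if (j : ℕ) = 0 then f₁ else if (j : ℕ) = 2 then 1 else 0)
      else 0)
    (Cbar : ℝ) (hCbar : Cbar = f₀ ^ 2 + f₁ ^ 2 + 2 * f₀ + 2 * f₁ + 2)
    (E : Matrix (Fin m) (Fin 3) ℝ)
    (hE : l2OpNorm E ≤ Real.sqrt Cbar) :
    ((X + E)ᵀ * (X + E)).det ≤ 48 * Cbar ^ ((5 : ℝ) / 2) * l2OpNorm E := by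
  have hnE0 : 0 ≤ l2OpNorm E := l2OpNorm_nonneg E
  set nE := l2OpNorm E with hnEdef
  have hC2 : (2:ℝ) ≤ Cbar := by nlinarith [sq_nonneg f₀, sq_nonneg f₁]
  have hC0 : (0:ℝ) < Cbar := by linarith
  set s := Real.sqrt Cbar with hsdef
  have hs0 : 0 ≤ s := Real.sqrt_nonneg _
  have hs2 : s ^ 2 = Cbar := Real.sq_sqrt hC0.le
  set M := X + E with hMdef
  have hMH : Mᴴ = Mᵀ := by ext i j; simp [Matrix.conjTranspose_apply]
  have hPSD : (Mᵀ * M).PosSemidef := by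
    rw [← hMH]; exact Matrix.posSemidef_conjTranspose_mul_self M
  have hHerm : (Mᵀ * M).IsHermitian := hPSD.1
  set μ := hHerm.eigenvalues with hμdef
  have hμ0 : ∀ i, 0 ≤ μ i := hPSD.eigenvalues_nonneg
  -- determinant is product of eigenvalues
  have hdet : (Mᵀ * M).det = μ 0 * μ 1 * μ 2 := by
    have := hHerm.det_eq_prod_eigenvalues
    rw [this, Fin.prod_univ_three]
    norm_num
    rfl
  -- trace is sum of eigenvalues
  have htr : (Mᵀ * M).trace = μ 0 + μ 1 + μ 2 := by
    nth_rewrite 1 [hHerm.spectral_theorem]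
    rw [Unitary.conjStarAlgAut_apply]
    rw [Matrix.trace_mul_comm, ← mul_assoc]
    have hU : star (hHerm.eigenvectorUnitary : Matrix (Fin 3) (Fin 3) ℝ) *
        (hHerm.eigenvectorUnitary : Matrix (Fin 3) (Fin 3) ℝ) = 1 :=
      Unitary.coe_star_mul_self hHerm.eigenvectorUnitary
    rw [hU, one_mul, Matrix.trace_diagonal, Fin.sum_univ_three]
    simp
    rfl
  -- trace as sum of squares
  have htr2 : (Mᵀ * M).trace = ∑ j : Fin 3, ∑ k, M k j ^ 2 := by
    simp [Matrix.trace, Matrix.diag, Matrix.mul_apply, Matrix.transpose_apply, sq]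
  -- the two special rows
  have h1m : 1 ≤ m - 1 := by omega
  set i0 : Fin m := ⟨0, by omega⟩ with hi0def
  set i1 : Fin m := ⟨m - 1, by omega⟩ with hi1def
  have hne01 : i0 ≠ i1 := by
    intro h
    have : (0:ℕ) = m - 1 := congrArg Fin.val h
    omega
  have hXzero : ∀ (k : Fin m) (j : Fin 3), k ≠ i0 → k ≠ i1 → X k j = 0 := by
    intro k j h0 h1
    have hk0 : (k:ℕ) ≠ 0 := fun h => h0 (Fin.ext h)
    have hk1 : (k:ℕ) ≠ m - 1 := fun h => h1 (Fin.ext h)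
    rw [hX]; simp [hk0, hk1]
  have hScol : ∀ j : Fin 3, ∑ k, X k j ^ 2 = X i0 j ^ 2 + X i1 j ^ 2 := by
    intro j
    rw [← Finset.sum_subset (Finset.subset_univ {i0, i1})
      (fun k _ hk => by
        simp only [Finset.mem_insert, Finset.mem_singleton, not_or] at hk
        rw [hXzero k j hk.1 hk.2]; ring)]
    rw [Finset.sum_pair hne01]
  have hm10 : (m - 1 : ℕ) ≠ 0 := by omega
  have hXi0 : ∀ j : Fin 3, X i0 j = if (j:ℕ) = 0 then f₀ else if (j:ℕ) = 1 then 1 else 0 := by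
    intro j; rw [hX]; simp [hi0def]
  have hXi1 : ∀ j : Fin 3, X i1 j = if (j:ℕ) = 0 then f₁ else if (j:ℕ) = 2 then 1 else 0 := by
    intro j; rw [hX]; simp [hi1def, hm10]
  have hSx : ∑ j : Fin 3, ∑ k, X k j ^ 2 = f₀ ^ 2 + f₁ ^ 2 + 2 := by
    rw [Fin.sum_univ_three, hScol 0, hScol 1, hScol 2,
      hXi0 0, hXi0 1, hXi0 2, hXi1 0, hXi1 1, hXi1 2]
    norm_num
    ring
  -- Frobenius bound on E
  have hEcol : ∀ j : Fin 3, ∑ k, E k j ^ 2 ≤ nE ^ 2 := by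
    intro j
    have h1 := norm_toEuclideanLin_le E (EuclideanSpace.single j (1:ℝ))
    rw [EuclideanSpace.norm_single] at h1
    simp only [norm_one, mul_one] at h1
    have h2 : ‖Matrix.toEuclideanLin E (EuclideanSpace.single j (1:ℝ))‖ ^ 2
        = ∑ k, E k j ^ 2 := by
      rw [PiLp.norm_sq_eq_of_L2]
      congr 1; funext k
      have : (Matrix.toEuclideanLin E (EuclideanSpace.single j (1:ℝ))) k = E k j := by
        simp [Matrix.toEuclideanLin_apply, Matrix.mulVec, dotProduct,
          EuclideanSpace.single_apply]
      rw [this, Real.norm_eq_abs, sq_abs]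
    rw [← h2]
    exact pow_le_pow_left₀ (norm_nonneg _) h1 2
  have hnE2 : nE ^ 2 ≤ Cbar := by nlinarith
  -- trace bound
  have hT : (Mᵀ * M).trace ≤ 8 * Cbar := by
    rw [htr2]
    have step : ∑ j : Fin 3, ∑ k, M k j ^ 2
        ≤ ∑ j : Fin 3, ∑ k, (2 * X k j ^ 2 + 2 * E k j ^ 2) := by
      refine Finset.sum_le_sum fun j _ => Finset.sum_le_sum fun k _ => ?_
      have : M k j = X k j + E k j := rfl
      rw [this]; nlinarith [sq_nonneg (X k j - E k j)]
    have expand : ∑ j : Fin 3, ∑ k, (2 * X k j ^ 2 + 2 * E k j ^ 2)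
        = 2 * (∑ j : Fin 3, ∑ k, X k j ^ 2) + 2 * (∑ j : Fin 3, ∑ k, E k j ^ 2) := by
      simp [Finset.sum_add_distrib, Finset.mul_sum]
    have hSe : ∑ j : Fin 3, ∑ k, E k j ^ 2 ≤ 3 * nE ^ 2 := by
      rw [Fin.sum_univ_three]
      linarith [hEcol 0, hEcol 1, hEcol 2]
    calc ∑ j : Fin 3, ∑ k, M k j ^ 2
        ≤ 2 * (∑ j : Fin 3, ∑ k, X k j ^ 2) + 2 * (∑ j : Fin 3, ∑ k, E k j ^ 2) :=
          step.trans expand.le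
      _ ≤ 2 * (f₀ ^ 2 + f₁ ^ 2 + 2) + 2 * (3 * nE ^ 2) := by rw [hSx]; linarith
      _ ≤ 8 * Cbar := by nlinarith
  -- Rayleigh quotient with the kernel vector
  set w : Fin 3 → ℝ := ![1, -f₀, -f₁] with hwdef
  set u : EuclideanSpace ℝ (Fin 3) := (WithLp.equiv 2 (Fin 3 → ℝ)).symm w with hudef
  have hXw : X *ᵥ w = 0 := by
    funext k
    simp only [Matrix.mulVec, dotProduct, Fin.sum_univ_three, hwdef]
    rw [hX k 0, hX k 1, hX k 2]
    rcases eq_or_ne (k:ℕ) 0 with hk0 | hk0 <;>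
      rcases eq_or_ne (k:ℕ) (m-1) with hk1 | hk1 <;>
      simp [hk0, hk1, hm10]
  have hMw : M *ᵥ w = E *ᵥ w := by
    rw [hMdef, Matrix.add_mulVec, hXw, zero_add]
  have hinner : ⟪u, Matrix.toEuclideanLin (Mᵀ * M) u⟫
      = ‖Matrix.toEuclideanLin E u‖ ^ 2 := by
    have l1 : ⟪u, Matrix.toEuclideanLin (Mᵀ * M) u⟫ = w ⬝ᵥ ((Mᵀ * M) *ᵥ w) := by
      simp [PiLp.inner_apply, RCLike.inner_apply, Matrix.toEuclideanLin_apply,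
        dotProduct, hudef, mul_comm]
    rw [l1, ← Matrix.mulVec_mulVec, Matrix.dotProduct_mulVec, Matrix.vecMul_transpose, hMw,
      PiLp.norm_sq_eq_of_L2]
    simp [Matrix.toEuclideanLin_apply, dotProduct, hudef, sq]
  have hnormu2 : ‖u‖ ^ 2 = 1 + f₀ ^ 2 + f₁ ^ 2 := by
    rw [PiLp.norm_sq_eq_of_L2]
    simp [hudef, hwdef, Fin.sum_univ_three, Real.norm_eq_abs, sq_abs]
  have hEu : ‖Matrix.toEuclideanLin E u‖ ^ 2 ≤ nE ^ 2 * ‖u‖ ^ 2 := by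
    have h := norm_toEuclideanLin_le E u
    calc ‖Matrix.toEuclideanLin E u‖ ^ 2 ≤ (nE * ‖u‖) ^ 2 :=
          pow_le_pow_left₀ (norm_nonneg _) h 2
      _ = nE ^ 2 * ‖u‖ ^ 2 := by ring
  obtain ⟨i, hi⟩ := rayleigh_min (by norm_num) (Mᵀ * M) hHerm u
  have hu2pos : 0 < ‖u‖ ^ 2 := by rw [hnormu2]; positivity
  have hμi : μ i ≤ nE ^ 2 := by
    have h3 : μ i * ‖u‖ ^ 2 ≤ nE ^ 2 * ‖u‖ ^ 2 := by
      calc μ i * ‖u‖ ^ 2 ≤ ⟪u, Matrix.toEuclideanLin (Mᵀ * M) u⟫ := hi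
        _ = ‖Matrix.toEuclideanLin E u‖ ^ 2 := hinner
        _ ≤ nE ^ 2 * ‖u‖ ^ 2 := hEu
    exact le_of_mul_le_mul_right h3 hu2pos
  have hμis : μ i ≤ s * nE := by nlinarith
  -- wrap up
  have hrhs : Cbar ^ ((5:ℝ)/2) = s ^ 5 := by
    rw [hsdef, Real.sqrt_eq_rpow, ← Real.rpow_natCast (Cbar ^ ((1:ℝ)/2)) 5,
      ← Real.rpow_mul hC0.le]
    norm_num
  have hsum : μ 0 + μ 1 + μ 2 ≤ 8 * s ^ 2 := by
    rw [hs2, ← htr]; exact hT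
  have key : ∀ a b c : ℝ, 0 ≤ a → 0 ≤ b → 0 ≤ c → a ≤ s * nE → a + b + c ≤ 8 * s ^ 2 →
      a * b * c ≤ 48 * s ^ 5 * nE := by
    intro a b c ha hb hc hae habc
    have hbc8 : b + c ≤ 8 * s ^ 2 := by linarith
    have hbc : b * c ≤ 16 * s ^ 4 := by
      nlinarith [sq_nonneg (b - c), sq_nonneg (b + c), mul_nonneg (add_nonneg hb hc) hb,
        mul_le_mul_of_nonneg_left hbc8 (add_nonneg hb hc)]
    have hsn : 0 ≤ s * nE := mul_nonneg hs0 hnE0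
    have h5nn : (0:ℝ) ≤ s ^ 5 * nE := by positivity
    calc a * b * c = a * (b * c) := by ring
      _ ≤ (s * nE) * (16 * s ^ 4) := by
          exact mul_le_mul hae hbc (mul_nonneg hb hc) hsn
      _ = 16 * (s ^ 5 * nE) := by ring
      _ ≤ 48 * s ^ 5 * nE := by linarith
  rw [hdet, hrhs]
  fin_cases i
  · exact key (μ 0) (μ 1) (μ 2) (hμ0 0) (hμ0 1) (hμ0 2) hμis hsum
  · calc μ 0 * μ 1 * μ 2 = μ 1 * μ 0 * μ 2 := by ring
      _ ≤ 48 * s ^ 5 * nE := key (μ 1) (μ 0) (μ 2) (hμ0 1) (hμ0 0) (hμ0 2) hμis (by linarith)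
  · calc μ 0 * μ 1 * μ 2 = μ 2 * μ 0 * μ 1 := by ring
      _ ≤ 48 * s ^ 5 * nE := key (μ 2) (μ 0) (μ 1) (hμ0 2) (hμ0 0) (hμ0 1) hμis (by linarith)
end
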